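/- The symplectic group acts transitively on centered elliptic geometric quantum states: if (ℓ, ℓ') and (ℓ'', ℓ''') are Lagrangian frames in (ℝ^{2n}, σ) and X_ℓ ⊆ ℓ, X_{ℓ''} ⊆ ℓ'' are centered ellipsoids carried by ℓ and ℓ'' respectively, then there exists a linear symplectic automorphism S of ℝ^{2n} such that S(X_ℓ + (X_ℓ)^ℏ_{ℓ'}) = X_{ℓ''} + (X_{ℓ''})^ℏ_{ℓ'''}, with S(ℓ) = ℓ'', S(ℓ') = ℓ''' and S(X_ℓ) = X_{ℓ''}. -/

import Mathlib

open MeasureTheory Real Metric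
open scoped RealInnerProductSpace Pointwise

noncomputable section

/-- `ℝⁿ` with its Euclidean structure. -/
abbrev En (n : ℕ) := EuclideanSpace ℝ (Fin n)

/-- The phase space `ℝ²ⁿ = ℝⁿ × ℝⁿ` with its Euclidean structure, the first block of
coordinates being the positions `x` and the second block the momenta `p`. -/
abbrev PS (n : ℕ) := EuclideanSpace ℝ (Fin n ⊕ Fin n)

/-- The standard symplectic matrix `J = [[0, I], [-I, 0]]`. -/
def Jmat (n : ℕ) : Matrix (Fin n ⊕ Fin n) (Fin n ⊕ Fin n) ℝ :=
  Matrix.fromBlocks 0 1 (-1) 0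

/-- The standard symplectic form `σ(z, z') = ⟨Jz, z'⟩`. -/
def symp (n : ℕ) (z z' : PS n) : ℝ := ⟪(Matrix.toEuclideanLin (Jmat n)) z, z'⟫

/-- The quadratic form `z ↦ ⟨Mz, z⟩`. -/
def qf {m : Type*} [Fintype m] [DecidableEq m] (M : Matrix m m ℝ)
    (z : EuclideanSpace ℝ m) : ℝ := ⟪(Matrix.toEuclideanLin M) z, z⟫

/-- The symplectic `ℏ`-polar dual `Ω^{ℏ,σ} = {z' : ∀ z ∈ Ω, σ(z, z') ≤ ℏ}`. -/
def sympDual (n : ℕ) (ℏ : ℝ) (Ω : Set (PS n)) : Set (PS n) :=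
  {z' | ∀ z ∈ Ω, symp n z z' ≤ ℏ}

/-- A linear automorphism of `ℝ²ⁿ` is symplectic if it preserves the symplectic form. -/
def IsSymplectic {n : ℕ} (S : PS n ≃ₗ[ℝ] PS n) : Prop :=
  ∀ z z', symp n (S z) (S z') = symp n z z'

/-- A Lagrangian plane: an `n`-dimensional subspace of `ℝ²ⁿ` on which `σ` vanishes
identically. -/
def IsLagrangian (n : ℕ) (ℓ : Submodule ℝ (PS n)) : Prop :=
  Module.finrank ℝ ℓ = n ∧ ∀ z ∈ ℓ, ∀ z' ∈ ℓ, symp n z z' = 0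

/-- A Lagrangian frame: a pair of transversal Lagrangian planes. -/
def IsLagrangianFrame (n : ℕ) (ℓ ℓ' : Submodule ℝ (PS n)) : Prop :=
  IsLagrangian n ℓ ∧ IsLagrangian n ℓ' ∧ ℓ ⊓ ℓ' = ⊥

/-- The Lagrangian polar dual of `X ⊆ ℓ` with respect to `ℓ'`:
`X^ℏ_{ℓ'} = {z' ∈ ℓ' : ∀ z ∈ X, σ(z, z') ≤ ℏ}`. -/
def lagDual (n : ℕ) (ℏ : ℝ) (ℓ' : Submodule ℝ (PS n)) (X : Set (PS n)) : Set (PS n) :=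
  {z' | z' ∈ ℓ' ∧ ∀ z ∈ X, symp n z z' ≤ ℏ}

/-- The position part of a phase-space point. -/
def xpart (n : ℕ) (z : PS n) : En n := WithLp.toLp 2 (fun i => z (Sum.inl i))

/-- The momentum part of a phase-space point. -/
def ppart (n : ℕ) (z : PS n) : En n := WithLp.toLp 2 (fun i => z (Sum.inr i))

/-- A centered ellipsoid carried by the subspace `ℓ`: the image of a Euclidean ball of
`ℝⁿ` under a linear isomorphism onto `ℓ`. -/
def IsCenteredEllipsoidOn (n : ℕ) (ℓ : Submodule ℝ (PS n)) (X : Set (PS n)) : Prop :=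
  ∃ L : En n →ₗ[ℝ] PS n, ∃ r : ℝ, 0 < r ∧ Function.Injective L ∧
    LinearMap.range L = ℓ ∧ X = ⇑L '' Metric.closedBall (0 : En n) r

/-! Each pair (Lagrangian frame `(ℓ, ℓ')`, centered ellipsoid `X ⊆ ℓ`) is the image of the
standard pair (`ℓ_x`, `ℓ_p`, unit ball of `ℓ_x`) under a linear symplectic automorphism. Write
`X = A(B(0, 1))` with `A : ℝⁿ → ℓ` onto. Since `ℓ ⊕ ℓ' = ℝ²ⁿ`, `ℓ'` is Lagrangian and `σ` is
nondegenerate, `v ↦ σ(v, A ·)` identifies `ℓ'` with the dual of `ℝⁿ`; this yields `B : ℝⁿ → ℓ'`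
onto with `σ(B y, A x) = ⟨y, x⟩`, and then `(x, p) ↦ A x + B p` preserves `σ`. Symplectic maps
carry Lagrangian polar duals to Lagrangian polar duals, so the composite of one such map with the
inverse of the other maps the first geometric state onto the second. -/

open Module

lemma injective_innerₗ (F : Type*) [NormedAddCommGroup F] [InnerProductSpace ℝ F] :
    Function.Injective (innerₗ F) :=
  fun _ _ h => ext_inner_right ℝ fun x => LinearMap.congr_fun h x

section Coordinates

variable {n : ℕ}

lemma eq_zero_of_xpart_of_ppart {z : PS n} (hx : xpart n z = 0) (hp : ppart n z = 0) :
    z = 0 := by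
  ext (i | i)
  · exact congr($hx i)
  · exact congr($hp i)

@[simp] lemma xpart_zero : xpart n 0 = 0 := rfl

@[simp] lemma ppart_zero : ppart n 0 = 0 := rfl

lemma inner_eq_xpart_add_ppart (z z' : PS n) :
    ⟪z, z'⟫ = ⟪xpart n z, xpart n z'⟫ + ⟪ppart n z, ppart n z'⟫ := by
  simp [PiLp.inner_apply, Fintype.sum_sum_type, xpart, ppart]

def xpartₗ (n : ℕ) : PS n →ₗ[ℝ] En n where
  toFun := xpart n
  map_add' _ _ := rfl
  map_smul' _ _ := rfl

def ppartₗ (n : ℕ) : PS n →ₗ[ℝ] En n where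
  toFun := ppart n
  map_add' _ _ := rfl
  map_smul' _ _ := rfl

def inlₗ (n : ℕ) : En n →ₗ[ℝ] PS n where
  toFun x := WithLp.toLp 2 (Sum.elim x 0)
  map_add' x y := by ext (i | i) <;> simp
  map_smul' c x := by ext (i | i) <;> simp

def inrₗ (n : ℕ) : En n →ₗ[ℝ] PS n where
  toFun p := WithLp.toLp 2 (Sum.elim 0 p)
  map_add' x y := by ext (i | i) <;> simp
  map_smul' c x := by ext (i | i) <;> simp

@[simp] lemma xpartₗ_apply (z : PS n) : xpartₗ n z = xpart n z := rfl
@[simp] lemma ppartₗ_apply (z : PS n) : ppartₗ n z = ppart n z := rfl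
@[simp] lemma xpart_inlₗ (x : En n) : xpart n (inlₗ n x) = x := rfl
@[simp] lemma ppart_inlₗ (x : En n) : ppart n (inlₗ n x) = 0 := rfl
@[simp] lemma xpart_inrₗ (p : En n) : xpart n (inrₗ n p) = 0 := rfl
@[simp] lemma ppart_inrₗ (p : En n) : ppart n (inrₗ n p) = p := rfl

end Coordinates

section SymplecticForm

variable {n : ℕ}

lemma xpart_Jmat (z : PS n) : xpart n (Matrix.toEuclideanLin (Jmat n) z) = ppart n z := by
  ext i
  simp [xpart, ppart, Jmat, Matrix.toLpLin_apply, Matrix.mulVec, dotProduct,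
    Fintype.sum_sum_type, Matrix.one_apply]

lemma ppart_Jmat (z : PS n) : ppart n (Matrix.toEuclideanLin (Jmat n) z) = -xpart n z := by
  ext i
  simp [xpart, ppart, Jmat, Matrix.toLpLin_apply, Matrix.mulVec, dotProduct,
    Fintype.sum_sum_type, Matrix.one_apply]

lemma symp_apply (z z' : PS n) :
    symp n z z' = ⟪ppart n z, xpart n z'⟫ - ⟪xpart n z, ppart n z'⟫ := by
  rw [symp, inner_eq_xpart_add_ppart, xpart_Jmat, ppart_Jmat, inner_neg_left, sub_eq_add_neg]

lemma symp_swap (z z' : PS n) : symp n z' z = -symp n z z' := by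
  rw [symp_apply, symp_apply, real_inner_comm (ppart n z'), real_inner_comm (xpart n z')]
  ring

lemma eq_zero_of_symp_eq_zero {z : PS n} (h : ∀ z', symp n z z' = 0) : z = 0 := by
  have hJ : Matrix.toEuclideanLin (Jmat n) z = 0 := inner_self_eq_zero.mp (h _)
  apply eq_zero_of_xpart_of_ppart
  · simpa [ppart_Jmat] using congr(ppart n $hJ)
  · simpa [xpart_Jmat] using congr(xpart n $hJ)

def sympForm (n : ℕ) : LinearMap.BilinForm ℝ (PS n) :=
  (innerₗ (PS n)).comp (Matrix.toEuclideanLin (Jmat n))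

lemma sympForm_apply (z z' : PS n) : sympForm n z z' = symp n z z' := rfl

end SymplecticForm

section SymplecticMaps

variable {n : ℕ}

lemma IsSymplectic.symm {S : PS n ≃ₗ[ℝ] PS n} (hS : IsSymplectic S) : IsSymplectic S.symm :=
  fun z z' => by rw [← hS, S.apply_symm_apply, S.apply_symm_apply]

lemma IsSymplectic.trans {S T : PS n ≃ₗ[ℝ] PS n} (hS : IsSymplectic S) (hT : IsSymplectic T) :
    IsSymplectic (S.trans T) :=
  fun z z' => (hT _ _).trans (hS z z')

lemma injective_of_symp_map_eq {T : PS n →ₗ[ℝ] PS n}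
    (hT : ∀ z z', symp n (T z) (T z') = symp n z z') : Function.Injective T := by
  refine (injective_iff_map_eq_zero T).mpr fun z hz => eq_zero_of_symp_eq_zero fun z' => ?_
  rw [← hT, hz, ← sympForm_apply, map_zero, LinearMap.zero_apply]

lemma exists_isSymplectic_of_symp_map_eq (T : PS n →ₗ[ℝ] PS n)
    (hT : ∀ z z', symp n (T z) (T z') = symp n z z') :
    ∃ S : PS n ≃ₗ[ℝ] PS n, IsSymplectic S ∧ S.toLinearMap = T :=
  ⟨.ofInjectiveEndo T (injective_of_symp_map_eq hT), hT, rfl⟩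

lemma IsSymplectic.image_lagDual {S : PS n ≃ₗ[ℝ] PS n} (hS : IsSymplectic S) (ℏ : ℝ)
    (ℓ' : Submodule ℝ (PS n)) (X : Set (PS n)) :
    S '' lagDual n ℏ ℓ' X = lagDual n ℏ (ℓ'.map S.toLinearMap) (S '' X) := by
  ext w
  obtain ⟨v, rfl⟩ := S.surjective w
  simp [lagDual, Submodule.mem_map_equiv, hS _ v]

lemma IsSymplectic.image_add_lagDual {S : PS n ≃ₗ[ℝ] PS n} (hS : IsSymplectic S) (ℏ : ℝ)
    (ℓ' : Submodule ℝ (PS n)) (X : Set (PS n)) :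
    S '' (X + lagDual n ℏ ℓ' X) = S '' X + lagDual n ℏ (ℓ'.map S.toLinearMap) (S '' X) := by
  rw [Set.image_add, hS.image_lagDual]

end SymplecticMaps

lemma IsCenteredEllipsoidOn.exists_eq_image_unitClosedBall {n : ℕ} {ℓ : Submodule ℝ (PS n)}
    {X : Set (PS n)} (hX : IsCenteredEllipsoidOn n ℓ X) :
    ∃ A : En n →ₗ[ℝ] PS n, LinearMap.range A = ℓ ∧ X = A '' closedBall 0 1 := by
  obtain ⟨L, r, hr, -, rfl, rfl⟩ := hX
  refine ⟨r • L, LinearMap.range_smul L r hr.ne', ?_⟩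
  rw [← smul_unitClosedBall_of_nonneg hr.le, image_smul_set, ← Set.image_smul, Set.image_image]
  rfl

namespace IsLagrangianFrame

variable {n : ℕ} {ℓ ℓ' : Submodule ℝ (PS n)}

lemma sup_eq_top (h : IsLagrangianFrame n ℓ ℓ') : ℓ ⊔ ℓ' = ⊤ := by
  obtain ⟨⟨hd, -⟩, ⟨hd', -⟩, hinf⟩ := h
  apply Submodule.eq_top_of_finrank_eq
  have := Submodule.finrank_sup_add_finrank_inf_eq ℓ ℓ'
  rw [hinf, finrank_bot, add_zero, hd, hd'] at this
  simp [this]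

lemma eq_zero_of_symp_eq_zero (h : IsLagrangianFrame n ℓ ℓ') {v : PS n} (hv : v ∈ ℓ')
    (hvℓ : ∀ u ∈ ℓ, symp n v u = 0) : v = 0 := by
  refine _root_.eq_zero_of_symp_eq_zero fun z => ?_
  have hz : z ∈ ℓ ⊔ ℓ' := h.sup_eq_top ▸ Submodule.mem_top
  obtain ⟨u, hu, w, hw, rfl⟩ := Submodule.mem_sup.mp hz
  rw [← sympForm_apply, map_add, sympForm_apply, sympForm_apply, hvℓ u hu, h.2.1.2 v hv w hw,
    add_zero]

lemma exists_symp_dual (h : IsLagrangianFrame n ℓ ℓ') {A : En n →ₗ[ℝ] PS n}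
    (hA : LinearMap.range A = ℓ) :
    ∃ B : En n →ₗ[ℝ] PS n, LinearMap.range B = ℓ' ∧ ∀ x y, symp n (B y) (A x) = ⟪y, x⟫ := by
  let Φ : ℓ' →ₗ[ℝ] Dual ℝ (En n) := (sympForm n).compl₁₂ ℓ'.subtype A
  have hΦ : Function.Injective Φ := by
    refine (injective_iff_map_eq_zero Φ).mpr fun v hv => Subtype.ext <|
      h.eq_zero_of_symp_eq_zero v.2 fun u hu => ?_
    obtain ⟨x, rfl⟩ := hA ▸ hu
    exact LinearMap.congr_fun hv x
  have hdim : finrank ℝ ℓ' = finrank ℝ (Dual ℝ (En n)) := by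
    rw [Subspace.dual_finrank_eq, h.2.1.1, finrank_euclideanSpace_fin]
  let eΦ := Φ.linearEquivOfInjective hΦ hdim
  let eI := (innerₗ (En n)).linearEquivOfInjective (injective_innerₗ _)
    Subspace.dual_finrank_eq.symm
  refine ⟨ℓ'.subtype ∘ₗ (eI.trans eΦ.symm).toLinearMap, ?_, fun x y => ?_⟩
  · rw [LinearMap.range_comp_of_range_eq_top _ (LinearEquiv.range _), Submodule.range_subtype]
  · exact LinearMap.congr_fun (eΦ.apply_symm_apply (eI y)) x

lemma exists_isSymplectic_comp_inlₗ_eq (h : IsLagrangianFrame n ℓ ℓ') {A : En n →ₗ[ℝ] PS n}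
    (hA : LinearMap.range A = ℓ) :
    ∃ S : PS n ≃ₗ[ℝ] PS n, IsSymplectic S ∧ S.toLinearMap ∘ₗ inlₗ n = A ∧
      LinearMap.range (S.toLinearMap ∘ₗ inrₗ n) = ℓ' := by
  obtain ⟨B, hB, hBA⟩ := h.exists_symp_dual hA
  have hAℓ x : A x ∈ ℓ := hA ▸ LinearMap.mem_range_self A x
  have hBℓ' y : B y ∈ ℓ' := hB ▸ LinearMap.mem_range_self B y
  let T := A ∘ₗ xpartₗ n + B ∘ₗ ppartₗ n
  have hT z z' : symp n (T z) (T z') = symp n z z' := by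
    simp only [T, LinearMap.add_apply, LinearMap.comp_apply, xpartₗ_apply, ppartₗ_apply,
      ← sympForm_apply, map_add, LinearMap.add_apply]
    simp only [sympForm_apply, h.1.2 _ (hAℓ _) _ (hAℓ _), h.2.1.2 _ (hBℓ' _) _ (hBℓ' _), hBA,
      symp_swap (B _) (A _), symp_apply z z', real_inner_comm (xpart n z)]
    ring
  obtain ⟨S, hS, hST⟩ := exists_isSymplectic_of_symp_map_eq T hT
  refine ⟨S, hS, ?_, ?_⟩
  · ext x : 1
    simp [hST, T]
  · convert hB using 2
    ext y : 1
    simp [hST, T]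

lemma exists_isSymplectic_image_unitClosedBall (h : IsLagrangianFrame n ℓ ℓ') {X : Set (PS n)}
    (hX : IsCenteredEllipsoidOn n ℓ X) :
    ∃ S : PS n ≃ₗ[ℝ] PS n, IsSymplectic S ∧
      (LinearMap.range (inlₗ n)).map S.toLinearMap = ℓ ∧
      (LinearMap.range (inrₗ n)).map S.toLinearMap = ℓ' ∧
      S '' (inlₗ n '' closedBall 0 1) = X := by
  obtain ⟨A, hA, rfl⟩ := hX.exists_eq_image_unitClosedBall
  obtain ⟨S, hS, hSA, hSB⟩ := h.exists_isSymplectic_comp_inlₗ_eq hA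
  refine ⟨S, hS, ?_, ?_, ?_⟩
  · rw [← LinearMap.range_comp, hSA, hA]
  · rw [← LinearMap.range_comp, hSB]
  · rw [Set.image_image, ← hSA]
    rfl

end IsLagrangianFrame

theorem stmt18_general (n : ℕ) (ℏ : ℝ)
    (ℓ ℓ' ℓ'' ℓ''' : Submodule ℝ (PS n))
    (h1 : IsLagrangianFrame n ℓ ℓ') (h2 : IsLagrangianFrame n ℓ'' ℓ''')
    (X₁ X₂ : Set (PS n))
    (hX₁ : IsCenteredEllipsoidOn n ℓ X₁) (hX₂ : IsCenteredEllipsoidOn n ℓ'' X₂) :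
    ∃ S : PS n ≃ₗ[ℝ] PS n, IsSymplectic S ∧
      ⇑S '' (X₁ + lagDual n ℏ ℓ' X₁) = X₂ + lagDual n ℏ ℓ''' X₂ ∧
      ℓ.map S.toLinearMap = ℓ'' ∧ ℓ'.map S.toLinearMap = ℓ''' ∧ ⇑S '' X₁ = X₂ := by
  obtain ⟨S₁, hS₁, rfl, rfl, rfl⟩ := h1.exists_isSymplectic_image_unitClosedBall hX₁
  obtain ⟨S₂, hS₂, rfl, rfl, rfl⟩ := h2.exists_isSymplectic_image_unitClosedBall hX₂
  have hS := hS₁.symm.trans hS₂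
  have hmap (p : Submodule ℝ (PS n)) :
      (p.map S₁.toLinearMap).map (S₁.symm.trans S₂).toLinearMap = p.map S₂.toLinearMap := by
    rw [LinearEquiv.coe_trans, Submodule.map_comp, ← Submodule.map_comp S₁.toLinearMap]
    simp
  have himage (Y : Set (PS n)) : S₁.symm.trans S₂ '' (S₁ '' Y) = S₂ '' Y := by
    simp [Set.image_image]
  refine ⟨S₁.symm.trans S₂, hS, ?_, hmap _, hmap _, himage _⟩
  rw [hS.image_add_lagDual, himage, hmap]

/-- the symplectic group acts transitively on centered elliptic geometric
quantum states: given Lagrangian frames `(ℓ, ℓ')`, `(ℓ'', ℓ''')` and centered ellipsoids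
`X₁ ⊆ ℓ`, `X₂ ⊆ ℓ''`, some linear symplectic automorphism `S` maps the geometric state
`X₁ + (X₁)^ℏ_{ℓ'}` onto `X₂ + (X₂)^ℏ_{ℓ'''}`, with `S(ℓ) = ℓ''`, `S(ℓ') = ℓ'''` and
`S(X₁) = X₂`. -/
theorem stmt18 (n : ℕ) (ℏ : ℝ) (hℏ : 0 < ℏ)
    (ℓ ℓ' ℓ'' ℓ''' : Submodule ℝ (PS n))
    (h1 : IsLagrangianFrame n ℓ ℓ') (h2 : IsLagrangianFrame n ℓ'' ℓ''')
    (X₁ X₂ : Set (PS n))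
    (hX₁ : IsCenteredEllipsoidOn n ℓ X₁) (hX₂ : IsCenteredEllipsoidOn n ℓ'' X₂) :
    ∃ S : PS n ≃ₗ[ℝ] PS n, IsSymplectic S ∧
      ⇑S '' (X₁ + lagDual n ℏ ℓ' X₁) = X₂ + lagDual n ℏ ℓ''' X₂ ∧
      ℓ.map S.toLinearMap = ℓ'' ∧ ℓ'.map S.toLinearMap = ℓ''' ∧ ⇑S '' X₁ = X₂ :=
  stmt18_general n ℏ ℓ ℓ' ℓ'' ℓ''' h1 h2 X₁ X₂ hX₁ hX₂
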